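/- arXiv:2409.04687 — 2 statements merged into one kernel-verified Lean document; each statement's English description precedes it below -/
import Mathlib

section
/- Let H be a Hopf G-coalgebra, A an H-comodule Poisson algebra, M an (A-underline, H)-comodule and N a Poisson A-module. Then the map γ from (A-underline)-linear H-colinear morphisms Hom^H_{A-underline}(M, N ⊗ H) to Lie A-module morphisms Hom_{A-underline}(M, N), given by γ(f)_α = (id ⊗ ε) ∘ π_{α,e} ∘ f_α, is a k-linear isomorphism, with inverse γ'(g)_α = ∏_{μν=α}((g_μ ⊗ id_ν) ∘ ρ_{μ,ν}). -/
open TensorProduct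

noncomputable section

/-- Transport along an equality of indices for a family of modules. -/
def famCast {k : Type*} [CommSemiring k] {G : Type*} {H : G → Type*}
    [∀ α, AddCommMonoid (H α)] [∀ α, Module k (H α)] {x y : G} (h : x = y) :
    H x →ₗ[k] H y := by subst h; exact LinearMap.id

/-- A Hopf `G`-coalgebra over `k`. -/
structure HopfGCoalgebra (k G : Type*) [Field k] [CommGroup G] where
  H : G → Type*
  [ring : ∀ α, Ring (H α)]
  [alg : ∀ α, Algebra k (H α)]
  Δ : ∀ α β : G, H (α * β) →ₐ[k] H α ⊗[k] H β
  ε : H 1 →ₐ[k] k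
  coassoc : ∀ α β γ : G,
    (TensorProduct.assoc k (H α) (H β) (H γ)).toLinearMap ∘ₗ
      TensorProduct.map (Δ α β).toLinearMap LinearMap.id ∘ₗ (Δ (α * β) γ).toLinearMap
    = TensorProduct.map LinearMap.id (Δ β γ).toLinearMap ∘ₗ (Δ α (β * γ)).toLinearMap ∘ₗ
        famCast (k := k) (mul_assoc α β γ)
  counit_left : ∀ α : G,
    (TensorProduct.lid k (H α)).toLinearMap ∘ₗ
      TensorProduct.map ε.toLinearMap LinearMap.id ∘ₗ (Δ 1 α).toLinearMap
    = famCast (k := k) (one_mul α)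
  counit_right : ∀ α : G,
    (TensorProduct.rid k (H α)).toLinearMap ∘ₗ
      TensorProduct.map LinearMap.id ε.toLinearMap ∘ₗ (Δ α 1).toLinearMap
    = famCast (k := k) (mul_one α)
  S : ∀ α : G, H α →ₗ[k] H α⁻¹
  antipode_left : ∀ α : G,
    LinearMap.mul' k (H α) ∘ₗ
      TensorProduct.map (famCast (k := k) (inv_inv α) ∘ₗ S α⁻¹) LinearMap.id ∘ₗ
      (Δ α⁻¹ α).toLinearMap ∘ₗ famCast (k := k) (inv_mul_cancel α).symm
    = Algebra.linearMap k (H α) ∘ₗ ε.toLinearMap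
  antipode_right : ∀ α : G,
    LinearMap.mul' k (H α⁻¹) ∘ₗ
      TensorProduct.map LinearMap.id (S α) ∘ₗ
      (Δ α⁻¹ α).toLinearMap ∘ₗ famCast (k := k) (inv_mul_cancel α).symm
    = Algebra.linearMap k (H α⁻¹) ∘ₗ ε.toLinearMap

attribute [instance] HopfGCoalgebra.ring HopfGCoalgebra.alg
variable {k G : Type*} [Field k] [CommGroup G]

/-- A family of Poisson algebras which is a right `H`-comodule Poisson algebra. -/
structure GComodulePoissonAlgebra (Hc : HopfGCoalgebra k G) where
  A : G → Type*
  [cring : ∀ α, CommRing (A α)]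
  [alg : ∀ α, Algebra k (A α)]
  pb : ∀ α : G, A α →ₗ[k] A α →ₗ[k] A α
  pb_skew : ∀ (α : G) (a b : A α), pb α a b = - pb α b a
  pb_jacobi : ∀ (α : G) (a b c : A α),
    pb α a (pb α b c) = pb α (pb α a b) c + pb α b (pb α a c)
  pb_leibniz : ∀ (α : G) (a b c : A α), pb α a (b * c) = pb α a b * c + b * pb α a c
  ρ : ∀ α β : G, A (α * β) →ₐ[k] A α ⊗[k] Hc.H β
  coassoc : ∀ α β γ : G,
    (TensorProduct.assoc k (A α) (Hc.H β) (Hc.H γ)).toLinearMap ∘ₗ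
      TensorProduct.map (ρ α β).toLinearMap LinearMap.id ∘ₗ (ρ (α * β) γ).toLinearMap
    = TensorProduct.map LinearMap.id (Hc.Δ β γ).toLinearMap ∘ₗ (ρ α (β * γ)).toLinearMap ∘ₗ
        famCast (k := k) (mul_assoc α β γ)
  counit : ∀ α : G,
    (TensorProduct.rid k (A α)).toLinearMap ∘ₗ
      TensorProduct.map LinearMap.id Hc.ε.toLinearMap ∘ₗ (ρ α 1).toLinearMap
    = famCast (k := k) (mul_one α)
  pb_comp : ∀ α β : G,
    (ρ α β).toLinearMap ∘ₗ TensorProduct.lift (pb (α * β))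
    = TensorProduct.map (TensorProduct.lift (pb α)) (LinearMap.mul' k (Hc.H β)) ∘ₗ
        (TensorProduct.tensorTensorTensorComm k (A α) (Hc.H β) (A α) (Hc.H β)).toLinearMap ∘ₗ
        TensorProduct.map (ρ α β).toLinearMap (ρ α β).toLinearMap

attribute [instance] GComodulePoissonAlgebra.cring GComodulePoissonAlgebra.alg

/-- A Poisson `(A,H)`-Hopf module. -/
structure PoissonHopfModule {Hc : HopfGCoalgebra k G}
    (Ac : GComodulePoissonAlgebra Hc) where
  M : G → Type*
  [acg : ∀ α, AddCommGroup (M α)]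
  [mod : ∀ α, Module k (M α)]
  smul : ∀ α : G, Ac.A α →ₗ[k] M α →ₗ[k] M α
  one_smul : ∀ (α : G) (m : M α), smul α 1 m = m
  mul_smul : ∀ (α : G) (a b : Ac.A α) (m : M α), smul α (a * b) m = smul α a (smul α b m)
  dia : ∀ α : G, Ac.A α →ₗ[k] M α →ₗ[k] M α
  dia_lie : ∀ (α : G) (a b : Ac.A α) (m : M α),
    dia α (Ac.pb α a b) m = dia α a (dia α b m) - dia α b (dia α a m)
  poisson1 : ∀ (α : G) (a b : Ac.A α) (m : M α),
    dia α a (smul α b m) = smul α (Ac.pb α a b) m + smul α b (dia α a m)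
  poisson2 : ∀ (α : G) (a b : Ac.A α) (m : M α),
    dia α (a * b) m = smul α a (dia α b m) + smul α b (dia α a m)
  ρ : ∀ α β : G, M (α * β) →ₗ[k] M α ⊗[k] Hc.H β
  coassoc : ∀ α β γ : G,
    (TensorProduct.assoc k (M α) (Hc.H β) (Hc.H γ)).toLinearMap ∘ₗ
      TensorProduct.map (ρ α β) LinearMap.id ∘ₗ ρ (α * β) γ
    = TensorProduct.map LinearMap.id (Hc.Δ β γ).toLinearMap ∘ₗ ρ α (β * γ) ∘ₗ
        famCast (k := k) (mul_assoc α β γ)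
  counit : ∀ α : G,
    (TensorProduct.rid k (M α)).toLinearMap ∘ₗ
      TensorProduct.map LinearMap.id Hc.ε.toLinearMap ∘ₗ ρ α 1
    = famCast (k := k) (mul_one α)
  smul_comp : ∀ α β : G,
    ρ α β ∘ₗ TensorProduct.lift (smul (α * β))
    = TensorProduct.map (TensorProduct.lift (smul α)) (LinearMap.mul' k (Hc.H β)) ∘ₗ
        (TensorProduct.tensorTensorTensorComm k (Ac.A α) (Hc.H β) (M α) (Hc.H β)).toLinearMap ∘ₗ
        TensorProduct.map (Ac.ρ α β).toLinearMap (ρ α β)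
  dia_comp : ∀ α β : G,
    ρ α β ∘ₗ TensorProduct.lift (dia (α * β))
    = TensorProduct.map (TensorProduct.lift (dia α)) (LinearMap.mul' k (Hc.H β)) ∘ₗ
        (TensorProduct.tensorTensorTensorComm k (Ac.A α) (Hc.H β) (M α) (Hc.H β)).toLinearMap ∘ₗ
        TensorProduct.map (Ac.ρ α β).toLinearMap (ρ α β)

attribute [instance] PoissonHopfModule.acg PoissonHopfModule.mod

variable {Hc : HopfGCoalgebra k G} {Ac : GComodulePoissonAlgebra Hc}

/-- A coinvariant family for a Poisson Hopf module. -/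
def PoissonHopfModule.IsCoinv (Mc : PoissonHopfModule Ac) (m : ∀ γ : G, Mc.M γ) : Prop :=
  ∀ γ β : G, Mc.ρ γ β (m (γ * β)) = m γ ⊗ₜ[k] (1 : Hc.H β)

/-- A coinvariant family for the comodule algebra `A`. -/
def GComodulePoissonAlgebra.IsCoinv (Ac : GComodulePoissonAlgebra Hc)
    (a : ∀ γ : G, Ac.A γ) : Prop :=
  ∀ γ β : G, Ac.ρ γ β (a (γ * β)) = a γ ⊗ₜ[k] (1 : Hc.H β)

/-- `M^{A_α}_α`, the space of elements killed by the Lie action. -/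
def PoissonHopfModule.diaInv (Mc : PoissonHopfModule Ac) (α : G) :
    Submodule k (Mc.M α) where
  carrier := {m | ∀ a : Ac.A α, Mc.dia α a m = 0}
  zero_mem' := fun a => map_zero _
  add_mem' := fun {x y} hx hy a => by rw [map_add, hx a, hy a, add_zero]
  smul_mem' := fun c x hx a => by rw [map_smul, hx a, smul_zero]

/-- The Poisson-central part `A^{A_α}_α` of `A_α`. -/
def GComodulePoissonAlgebra.center (Ac : GComodulePoissonAlgebra Hc) (α : G) :
    Submodule k (Ac.A α) where
  carrier := {a | ∀ b : Ac.A α, Ac.pb α a b = 0}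
  zero_mem' := fun b => by rw [map_zero]; rfl
  add_mem' := fun {x y} hx hy b => by rw [map_add]; simp [hx b, hy b]
  smul_mem' := fun c x hx b => by rw [map_smul]; simp [hx b]

/-- `M^{coH}_α` for a Poisson Hopf module. -/
def PoissonHopfModule.coinv (Mc : PoissonHopfModule Ac) (α : G) : Set (Mc.M α) :=
  {x | ∃ m : ∀ γ : G, Mc.M γ, Mc.IsCoinv m ∧ m α = x}

/-- `A^{coH}_α`. -/
def GComodulePoissonAlgebra.coinv (Ac : GComodulePoissonAlgebra Hc) (α : G) :
    Set (Ac.A α) :=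
  {x | ∃ a : ∀ γ : G, Ac.A γ, Ac.IsCoinv a ∧ a α = x}

/-- A Lie `A`-module. -/
structure LieAModule (Ac : GComodulePoissonAlgebra Hc) where
  N : G → Type*
  [acg : ∀ α, AddCommGroup (N α)]
  [mod : ∀ α, Module k (N α)]
  dia : ∀ α : G, Ac.A α →ₗ[k] N α →ₗ[k] N α
  dia_lie : ∀ (α : G) (a b : Ac.A α) (n : N α),
    dia α (Ac.pb α a b) n = dia α a (dia α b n) - dia α b (dia α a n)

attribute [instance] LieAModule.acg LieAModule.mod

/-- A Poisson `A`-module. -/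
structure PoissonAModule (Ac : GComodulePoissonAlgebra Hc) where
  N : G → Type*
  [acg : ∀ α, AddCommGroup (N α)]
  [mod : ∀ α, Module k (N α)]
  smul : ∀ α : G, Ac.A α →ₗ[k] N α →ₗ[k] N α
  one_smul : ∀ (α : G) (n : N α), smul α 1 n = n
  mul_smul : ∀ (α : G) (a b : Ac.A α) (n : N α), smul α (a * b) n = smul α a (smul α b n)
  dia : ∀ α : G, Ac.A α →ₗ[k] N α →ₗ[k] N α
  dia_lie : ∀ (α : G) (a b : Ac.A α) (n : N α),
    dia α (Ac.pb α a b) n = dia α a (dia α b n) - dia α b (dia α a n)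
  poisson1 : ∀ (α : G) (a b : Ac.A α) (n : N α),
    dia α a (smul α b n) = smul α (Ac.pb α a b) n + smul α b (dia α a n)
  poisson2 : ∀ (α : G) (a b : Ac.A α) (n : N α),
    dia α (a * b) n = smul α a (dia α b n) + smul α b (dia α a n)

attribute [instance] PoissonAModule.acg PoissonAModule.mod

variable (Hc) in
/-- The component `ρ_{μ',ν'}` of the coaction of `H` on `N ⊗ H`, restricted to the
component `N_μ ⊗ H_ν` (for `μν = μ'ν'`); it takes values in the component
`N_μ ⊗ H_{μ⁻¹μ'}` tensored with `H_{ν'}`. -/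
def tensorCoact {N : G → Type*} [∀ α, AddCommGroup (N α)] [∀ α, Module k (N α)]
    (μ ν μ' ν' : G) (h : μ * ν = μ' * ν') :
    (N μ ⊗[k] Hc.H ν) →ₗ[k] (N μ ⊗[k] Hc.H (μ⁻¹ * μ')) ⊗[k] Hc.H ν' :=
  (TensorProduct.assoc k (N μ) (Hc.H (μ⁻¹ * μ')) (Hc.H ν')).symm.toLinearMap ∘ₗ
    TensorProduct.map LinearMap.id
      ((Hc.Δ (μ⁻¹ * μ') ν').toLinearMap ∘ₗ
        famCast (k := k) (show ν = (μ⁻¹ * μ') * ν' by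
          rw [mul_assoc]; exact eq_inv_mul_iff_mul_eq.mpr h))

variable (Ac) in
/-- The Lie action of `A_{μν}` on the component `N_μ ⊗ H_ν` of `N ⊗ H`:
`a ⋄ (n ⊗ h) = a_{(0,μ)} ⋄ n ⊗ a_{(1,ν)} h`. -/
def compDia (N : G → Type*) [∀ α, AddCommGroup (N α)] [∀ α, Module k (N α)]
    (dia : ∀ α : G, Ac.A α →ₗ[k] N α →ₗ[k] N α) (μ ν : G) :
    Ac.A (μ * ν) →ₗ[k] (N μ ⊗[k] Hc.H ν) →ₗ[k] (N μ ⊗[k] Hc.H ν) :=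
  TensorProduct.curry
    (TensorProduct.map (TensorProduct.lift (dia μ)) (LinearMap.mul' k (Hc.H ν)) ∘ₗ
      (TensorProduct.tensorTensorTensorComm k (Ac.A μ) (Hc.H ν) (N μ) (Hc.H ν)).toLinearMap ∘ₗ
      TensorProduct.map (Ac.ρ μ ν).toLinearMap LinearMap.id)

section TensorProps

variable {N : G → Type*} [∀ α, AddCommGroup (N α)] [∀ α, Module k (N α)]

variable (Ac) in
/-- The comodule coassociativity axiom for `N ⊗ H`, componentwise. -/
def TensorCoassoc (N : G → Type*) [∀ α, AddCommGroup (N α)] [∀ α, Module k (N α)] : Prop :=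
  ∀ (μ ν α β γ : G) (h : μ * ν = α * β * γ),
    (TensorProduct.assoc k (N μ ⊗[k] Hc.H (μ⁻¹ * α)) (Hc.H β) (Hc.H γ)).toLinearMap ∘ₗ
      TensorProduct.map
        (tensorCoact Hc (N := N) μ (μ⁻¹ * (α * β)) α β (mul_inv_cancel_left μ (α * β)))
        (LinearMap.id : Hc.H γ →ₗ[k] Hc.H γ) ∘ₗ
      tensorCoact Hc (N := N) μ ν (α * β) γ h
    = TensorProduct.map LinearMap.id (Hc.Δ β γ).toLinearMap ∘ₗ
        tensorCoact Hc (N := N) μ ν α (β * γ) (by rw [← mul_assoc]; exact h)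

variable (Ac) in
/-- The comodule counit axiom for `N ⊗ H`, componentwise. -/
def TensorCounit (N : G → Type*) [∀ α, AddCommGroup (N α)] [∀ α, Module k (N α)] : Prop :=
  ∀ μ ν : G,
    (TensorProduct.rid k (N μ ⊗[k] Hc.H (μ⁻¹ * (μ * ν)))).toLinearMap ∘ₗ
      TensorProduct.map LinearMap.id Hc.ε.toLinearMap ∘ₗ
      tensorCoact Hc (N := N) μ ν (μ * ν) 1 (mul_one (μ * ν)).symm
    = TensorProduct.map LinearMap.id
        (famCast (k := k) (inv_mul_cancel_left μ ν).symm)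

variable (Ac) in
/-- The compatibility (2.4) between the Lie action and the coaction on `N ⊗ H`,
componentwise. -/
def TensorDiaCompat (N : G → Type*) [∀ α, AddCommGroup (N α)] [∀ α, Module k (N α)]
    (dia : ∀ α : G, Ac.A α →ₗ[k] N α →ₗ[k] N α) : Prop :=
  ∀ (μ ν μ' ν' : G) (h : μ * ν = μ' * ν'),
    tensorCoact Hc (N := N) μ ν μ' ν' h ∘ₗ
        TensorProduct.lift (compDia Ac N dia μ ν)
    = TensorProduct.map
        (TensorProduct.lift (compDia Ac N dia μ (μ⁻¹ * μ') ∘ₗ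
          famCast (k := k) (mul_inv_cancel_left μ μ').symm))
        (LinearMap.mul' k (Hc.H ν')) ∘ₗ
      (TensorProduct.tensorTensorTensorComm k (Ac.A μ') (Hc.H ν')
        (N μ ⊗[k] Hc.H (μ⁻¹ * μ')) (Hc.H ν')).toLinearMap ∘ₗ
      TensorProduct.map ((Ac.ρ μ' ν').toLinearMap ∘ₗ famCast (k := k) h)
        (tensorCoact Hc (N := N) μ ν μ' ν' h)

end TensorProps

/-- The component at `α` of `N ⊗ H`: the product `∏_{μν=α} N_μ ⊗ H_ν`. -/
abbrev TProd (Hc : HopfGCoalgebra k G) (N : G → Type*)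
    [∀ α, AddCommGroup (N α)] [∀ α, Module k (N α)] (α : G) :=
  (q : {q : G × G // q.1 * q.2 = α}) → (N q.1.1 ⊗[k] Hc.H q.1.2)

section TProd

variable (Hc) {N : G → Type*} [∀ α, AddCommGroup (N α)] [∀ α, Module k (N α)]

/-- The canonical projection `π_{μ,ν}` of `(N ⊗ H)_α` onto the component
`N_μ ⊗ H_ν`. -/
def TProdProj (α : G) (p : G × G) (h : p.1 * p.2 = α) :
    TProd Hc N α →ₗ[k] N p.1 ⊗[k] Hc.H p.2 where
  toFun x := x ⟨p, h⟩
  map_add' _ _ := rfl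
  map_smul' _ _ := rfl

/-- The coaction `ρ_{α,β}` of `H` on `N ⊗ H`, valued in the componentwise tensor
product `∏_{κλ=α} (N_κ ⊗ H_λ) ⊗ H_β`. -/
def TProdCoact (α β : G) :
    TProd Hc N (α * β) →ₗ[k]
      ((q : {q : G × G // q.1 * q.2 = α}) → ((N q.1.1 ⊗[k] Hc.H q.1.2) ⊗[k] Hc.H β)) :=
  LinearMap.pi fun q =>
    TensorProduct.map
        (TensorProduct.map LinearMap.id
          (famCast (k := k) ((eq_inv_mul_iff_mul_eq.mpr q.2).symm)))
        LinearMap.id ∘ₗ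
      tensorCoact Hc (N := N) q.1.1 (q.1.2 * β) α β (by rw [← mul_assoc, q.2]) ∘ₗ
      TProdProj Hc (α * β) (q.1.1, q.1.2 * β) (by rw [← mul_assoc, q.2])

/-- The canonical map `(∏_i X_i) ⊗ H_β → ∏_i (X_i ⊗ H_β)`. -/
def TProdDist (α β : G) :
    (TProd Hc N α ⊗[k] Hc.H β) →ₗ[k]
      ((q : {q : G × G // q.1 * q.2 = α}) → ((N q.1.1 ⊗[k] Hc.H q.1.2) ⊗[k] Hc.H β)) :=
  LinearMap.pi fun q =>
    TensorProduct.map (TProdProj Hc α q.1 q.2) LinearMap.id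

variable (Ac) in
/-- The Lie action of `a ∈ A_α` on `(N ⊗ H)_α`, componentwise. -/
def TProdDia (dia : ∀ α : G, Ac.A α →ₗ[k] N α →ₗ[k] N α) (α : G) (a : Ac.A α) :
    TProd Hc N α →ₗ[k] TProd Hc N α :=
  LinearMap.pi fun q =>
    compDia Ac N dia q.1.1 q.1.2 (famCast (k := k) q.2.symm a) ∘ₗ
      TProdProj Hc α q.1 q.2

end TProd

/-- An `(A-underline, H)`-comodule: a Lie `A`-module and right `H`-comodule
satisfying the compatibility (2.4). -/
structure AulineHComodule (Ac : GComodulePoissonAlgebra Hc) where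
  M : G → Type*
  [acg : ∀ α, AddCommGroup (M α)]
  [mod : ∀ α, Module k (M α)]
  dia : ∀ α : G, Ac.A α →ₗ[k] M α →ₗ[k] M α
  dia_lie : ∀ (α : G) (a b : Ac.A α) (m : M α),
    dia α (Ac.pb α a b) m = dia α a (dia α b m) - dia α b (dia α a m)
  ρ : ∀ α β : G, M (α * β) →ₗ[k] M α ⊗[k] Hc.H β
  coassoc : ∀ α β γ : G,
    (TensorProduct.assoc k (M α) (Hc.H β) (Hc.H γ)).toLinearMap ∘ₗ
      TensorProduct.map (ρ α β) LinearMap.id ∘ₗ ρ (α * β) γ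
    = TensorProduct.map LinearMap.id (Hc.Δ β γ).toLinearMap ∘ₗ ρ α (β * γ) ∘ₗ
        famCast (k := k) (mul_assoc α β γ)
  counit : ∀ α : G,
    (TensorProduct.rid k (M α)).toLinearMap ∘ₗ
      TensorProduct.map LinearMap.id Hc.ε.toLinearMap ∘ₗ ρ α 1
    = famCast (k := k) (mul_one α)
  dia_comp : ∀ α β : G,
    ρ α β ∘ₗ TensorProduct.lift (dia (α * β))
    = TensorProduct.map (TensorProduct.lift (dia α)) (LinearMap.mul' k (Hc.H β)) ∘ₗ
        (TensorProduct.tensorTensorTensorComm k (Ac.A α) (Hc.H β) (M α) (Hc.H β)).toLinearMap ∘ₗ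
        TensorProduct.map (Ac.ρ α β).toLinearMap (ρ α β)

attribute [instance] AulineHComodule.acg AulineHComodule.mod

section Gamma

variable (Mc : AulineHComodule Ac) (N : G → Type*)
  [∀ α, AddCommGroup (N α)] [∀ α, Module k (N α)]

/-- `γ(f)_α = (id ⊗ ε) ∘ π_{α,e} ∘ f_α`. -/
def gammaMap (f : ∀ α : G, Mc.M α →ₗ[k] TProd Hc N α) (α : G) :
    Mc.M α →ₗ[k] N α :=
  (TensorProduct.rid k (N α)).toLinearMap ∘ₗ
    TensorProduct.map LinearMap.id Hc.ε.toLinearMap ∘ₗ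
    TProdProj Hc α (α, 1) (mul_one α) ∘ₗ f α

/-- `γ'(g)_α = ∏_{μν=α} (g_μ ⊗ id) ∘ ρ_{μ,ν}`. -/
def gammaInv (g : ∀ α : G, Mc.M α →ₗ[k] N α) (α : G) :
    Mc.M α →ₗ[k] TProd Hc N α :=
  LinearMap.pi fun q =>
    TensorProduct.map (g q.1.1) LinearMap.id ∘ₗ Mc.ρ q.1.1 q.1.2 ∘ₗ
      famCast (k := k) q.2.symm

/-- Lie `A`-linearity for a family of maps into `N ⊗ H`. -/
def IsLieHomToTProd (dia : ∀ α : G, Ac.A α →ₗ[k] N α →ₗ[k] N α)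
    (f : ∀ α : G, Mc.M α →ₗ[k] TProd Hc N α) : Prop :=
  ∀ (α : G) (a : Ac.A α) (m : Mc.M α),
    f α (Mc.dia α a m) = TProdDia Hc Ac dia α a (f α m)

/-- `H`-colinearity for a family of maps into `N ⊗ H`. -/
def IsColinearToTProd (f : ∀ α : G, Mc.M α →ₗ[k] TProd Hc N α) : Prop :=
  ∀ α β : G,
    TProdCoact Hc α β ∘ₗ f (α * β)
      = TProdDist Hc α β ∘ₗ TensorProduct.map (f α) LinearMap.id ∘ₗ Mc.ρ α β

/-- Lie `A`-linearity for a family of maps `M → N`. -/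
def IsLieHom (dia : ∀ α : G, Ac.A α →ₗ[k] N α →ₗ[k] N α)
    (g : ∀ α : G, Mc.M α →ₗ[k] N α) : Prop :=
  ∀ (α : G) (a : Ac.A α) (m : Mc.M α), g α (Mc.dia α a m) = dia α a (g α m)

end Gamma


section Helpers

@[simp] lemma famCast_self_eq {H : G → Type*} [∀ α, AddCommMonoid (H α)]
    [∀ α, Module k (H α)] {x : G} (h : x = x) :
    famCast (k := k) (H := H) h = LinearMap.id := rfl

lemma famCast_famCast {H : G → Type*} [∀ α, AddCommMonoid (H α)]
    [∀ α, Module k (H α)] {x y z : G} (h : x = y) (h' : y = z) (a : H x) :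
    famCast (k := k) (H := H) h' (famCast (k := k) h a)
      = famCast (k := k) (h.trans h') a := by
  subst h; subst h'; rfl

lemma Delta_cast {Hc : HopfGCoalgebra k G} {x y : G} (β : G) (h : x = y)
    (h' : x * β = y * β) (t : Hc.H (x * β)) :
    Hc.Δ y β (famCast (k := k) h' t)
      = TensorProduct.map (famCast (k := k) h) LinearMap.id (Hc.Δ x β t) := by
  subst h
  simp

@[simp] lemma TProdProj_apply {N : G → Type*} [∀ α, AddCommGroup (N α)]
    [∀ α, Module k (N α)] (α : G) (p : G × G) (h : p.1 * p.2 = α)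
    (x : TProd Hc N α) :
    TProdProj Hc α p h x = x ⟨p, h⟩ := rfl

lemma TProd_congr_right {N : G → Type*} [∀ α, AddCommGroup (N α)]
    [∀ α, Module k (N α)] {α : G} (x : TProd Hc N α) {μ ν ν' : G}
    (h : ν = ν') (p : μ * ν = α) (p' : μ * ν' = α) :
    x ⟨(μ, ν'), p'⟩
      = TensorProduct.map LinearMap.id (famCast (k := k) h) (x ⟨(μ, ν), p⟩) := by
  subst h
  simp only [famCast_self_eq, TensorProduct.map_id, LinearMap.id_apply]

end Helpers

set_option maxHeartbeats 2000000 in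
set_option synthInstance.maxHeartbeats 400000 in
/-- The map `γ(f)_α = (id ⊗ ε) ∘ π_{α,e} ∘ f_α` is a `k`-linear isomorphism from
`Hom^H_{A-underline}(M, N ⊗ H)` onto `Hom_{A-underline}(M, N)`, with inverse
`γ'(g)_α = ∏_{μν=α} (g_μ ⊗ id) ∘ ρ_{μ,ν}`. -/
theorem gamma_isomorphism (Mc : AulineHComodule Ac) (Nc : PoissonAModule Ac) :
    (∀ f : ∀ α : G, Mc.M α →ₗ[k] TProd Hc Nc.N α,
      IsLieHomToTProd Mc Nc.N Nc.dia f → IsColinearToTProd Mc Nc.N f →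
        IsLieHom Mc Nc.N Nc.dia (gammaMap Mc Nc.N f)) ∧
    (∀ g : ∀ α : G, Mc.M α →ₗ[k] Nc.N α, IsLieHom Mc Nc.N Nc.dia g →
      IsLieHomToTProd Mc Nc.N Nc.dia (gammaInv Mc Nc.N g) ∧
        IsColinearToTProd Mc Nc.N (gammaInv Mc Nc.N g)) ∧
    (∀ f : ∀ α : G, Mc.M α →ₗ[k] TProd Hc Nc.N α,
      IsLieHomToTProd Mc Nc.N Nc.dia f → IsColinearToTProd Mc Nc.N f →
        gammaInv Mc Nc.N (gammaMap Mc Nc.N f) = f) ∧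
    (∀ g : ∀ α : G, Mc.M α →ₗ[k] Nc.N α, IsLieHom Mc Nc.N Nc.dia g →
      gammaMap Mc Nc.N (gammaInv Mc Nc.N g) = g) ∧
    (∀ f f' : ∀ α : G, Mc.M α →ₗ[k] TProd Hc Nc.N α,
      gammaMap Mc Nc.N (fun α => f α + f' α)
        = fun α => gammaMap Mc Nc.N f α + gammaMap Mc Nc.N f' α) ∧
    (∀ (c : k) (f : ∀ α : G, Mc.M α →ₗ[k] TProd Hc Nc.N α),
      gammaMap Mc Nc.N (fun α => c • f α) = fun α => c • gammaMap Mc Nc.N f α) := by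
  refine ⟨?_, ?_, ?_, ?_, ?_, ?_⟩
  · -- γ(f) is a Lie A-module morphism
    intro f hf _hcol
    intro α a m
    have hcnt := LinearMap.congr_fun (Ac.counit α) (famCast (k := k) (mul_one α).symm a)
    simp only [LinearMap.coe_comp, Function.comp_apply, LinearEquiv.coe_coe,
      AlgHom.toLinearMap_apply, famCast_famCast, famCast_self_eq,
      LinearMap.id_apply] at hcnt
    have key : ∀ (x : Ac.A α ⊗[k] Hc.H 1) (y : Nc.N α ⊗[k] Hc.H 1),
        (TensorProduct.rid k (Nc.N α)) (TensorProduct.map LinearMap.id Hc.ε.toLinearMap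
          (TensorProduct.map (TensorProduct.lift (Nc.dia α)) (LinearMap.mul' k (Hc.H 1))
            (TensorProduct.tensorTensorTensorComm k (Ac.A α) (Hc.H 1) (Nc.N α) (Hc.H 1)
              (x ⊗ₜ[k] y))))
        = Nc.dia α ((TensorProduct.rid k (Ac.A α))
            (TensorProduct.map LinearMap.id Hc.ε.toLinearMap x))
          ((TensorProduct.rid k (Nc.N α))
            (TensorProduct.map LinearMap.id Hc.ε.toLinearMap y)) := by
      intro x y
      induction x using TensorProduct.induction_on with
      | zero => simp only [TensorProduct.zero_tmul, map_zero, LinearMap.map_zero, LinearMap.zero_apply]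
      | tmul a0 h1 =>
        induction y using TensorProduct.induction_on with
        | zero => simp only [TensorProduct.tmul_zero, map_zero, LinearMap.map_zero, LinearMap.zero_apply]
        | tmul n t =>
          simp [TensorProduct.tensorTensorTensorComm_tmul, TensorProduct.map_tmul,
            TensorProduct.lift.tmul, LinearMap.mul'_apply, TensorProduct.rid_tmul,
            map_mul, smul_smul, mul_comm]
        | add y1 y2 hy1 hy2 =>
          simp only [TensorProduct.tmul_add, map_add, hy1, hy2]
      | add x1 x2 hx1 hx2 =>
        simp only [TensorProduct.add_tmul, map_add, hx1, hx2, LinearMap.add_apply,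
          LinearMap.map_add]
    show (TensorProduct.rid k (Nc.N α)) (TensorProduct.map LinearMap.id Hc.ε.toLinearMap
        (TProdProj Hc α (α, 1) (mul_one α) (f α (Mc.dia α a m))))
      = Nc.dia α a ((TensorProduct.rid k (Nc.N α))
          (TensorProduct.map LinearMap.id Hc.ε.toLinearMap
            (TProdProj Hc α (α, 1) (mul_one α) (f α m))))
    rw [hf α a m]
    show (TensorProduct.rid k (Nc.N α)) (TensorProduct.map LinearMap.id Hc.ε.toLinearMap
        (TensorProduct.map (TensorProduct.lift (Nc.dia α)) (LinearMap.mul' k (Hc.H 1))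
          (TensorProduct.tensorTensorTensorComm k (Ac.A α) (Hc.H 1) (Nc.N α) (Hc.H 1)
            (TensorProduct.map (Ac.ρ α 1).toLinearMap LinearMap.id
              ((famCast (k := k) (mul_one α).symm a) ⊗ₜ[k]
                (TProdProj Hc α (α, 1) (mul_one α) (f α m)))))))
      = Nc.dia α a ((TensorProduct.rid k (Nc.N α))
          (TensorProduct.map LinearMap.id Hc.ε.toLinearMap
            (TProdProj Hc α (α, 1) (mul_one α) (f α m))))
    rw [TensorProduct.map_tmul, LinearMap.id_apply]
    rw [key]
    rw [show TensorProduct.map LinearMap.id Hc.ε.toLinearMap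
        ((Ac.ρ α 1).toLinearMap (famCast (k := k) (mul_one α).symm a))
        = TensorProduct.map LinearMap.id Hc.ε.toLinearMap
          ((Ac.ρ α 1) (famCast (k := k) (mul_one α).symm a)) from rfl]
    rw [hcnt]
  · -- γ'(g) is a Lie morphism and is colinear
    intro g hg
    constructor
    · -- Lie morphism
      intro α a m
      funext q
      obtain ⟨⟨μ, ν⟩, hq⟩ := q
      subst hq
      have hdia := LinearMap.congr_fun (Mc.dia_comp μ ν) (a ⊗ₜ[k] m)
      simp only [LinearMap.coe_comp, Function.comp_apply, LinearEquiv.coe_coe,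
        TensorProduct.lift.tmul, TensorProduct.map_tmul,
        AlgHom.toLinearMap_apply] at hdia
      have claim : ∀ (x : Ac.A μ ⊗[k] Hc.H ν) (y : Mc.M μ ⊗[k] Hc.H ν),
          TensorProduct.map (g μ) LinearMap.id
            (TensorProduct.map (TensorProduct.lift (Mc.dia μ)) (LinearMap.mul' k (Hc.H ν))
              (TensorProduct.tensorTensorTensorComm k (Ac.A μ) (Hc.H ν) (Mc.M μ) (Hc.H ν)
                (x ⊗ₜ[k] y)))
          = TensorProduct.map (TensorProduct.lift (Nc.dia μ)) (LinearMap.mul' k (Hc.H ν))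
              (TensorProduct.tensorTensorTensorComm k (Ac.A μ) (Hc.H ν) (Nc.N μ) (Hc.H ν)
                (x ⊗ₜ[k] (TensorProduct.map (g μ) LinearMap.id y))) := by
        intro x y
        induction x using TensorProduct.induction_on with
        | zero => simp only [TensorProduct.zero_tmul, map_zero, LinearMap.map_zero]
        | tmul a0 h1 =>
          induction y using TensorProduct.induction_on with
          | zero => simp only [TensorProduct.tmul_zero, map_zero, LinearMap.map_zero]
          | tmul m0 t =>
            simp only [TensorProduct.tensorTensorTensorComm_tmul, TensorProduct.map_tmul,
              TensorProduct.lift.tmul, LinearMap.mul'_apply, LinearMap.id_apply, hg μ]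
          | add y1 y2 hy1 hy2 =>
            simp only [TensorProduct.tmul_add, map_add, hy1, hy2]
        | add x1 x2 hx1 hx2 =>
          simp only [TensorProduct.add_tmul, map_add, hx1, hx2]
      show TensorProduct.map (g μ) LinearMap.id
          (Mc.ρ μ ν (famCast (k := k) (rfl : μ * ν = μ * ν) (Mc.dia (μ * ν) a m)))
        = TensorProduct.map (TensorProduct.lift (Nc.dia μ)) (LinearMap.mul' k (Hc.H ν))
            (TensorProduct.tensorTensorTensorComm k (Ac.A μ) (Hc.H ν) (Nc.N μ) (Hc.H ν)
              (TensorProduct.map (Ac.ρ μ ν).toLinearMap LinearMap.id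
                ((famCast (k := k) (rfl : μ * ν = μ * ν) a) ⊗ₜ[k]
                  (TensorProduct.map (g μ) LinearMap.id
                    (Mc.ρ μ ν (famCast (k := k) (rfl : μ * ν = μ * ν) m))))))
      simp only [famCast_self_eq, LinearMap.id_apply, TensorProduct.map_tmul,
        AlgHom.toLinearMap_apply]
      rw [hdia]
      exact claim _ _
    · -- colinear
      intro α β
      refine LinearMap.ext fun m => funext fun q => ?_
      obtain ⟨⟨μ, ν⟩, hq⟩ := q
      subst hq
      have s : μ⁻¹ * (μ * ν) = ν := inv_mul_cancel_left μ ν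
      have pf : μ * (ν * β) = (μ * ν) * β := (mul_assoc μ ν β).symm
      have hR2 : ∀ (h : μ * ν = μ * ν) (t : Mc.M (μ * ν) ⊗[k] Hc.H β),
          TensorProduct.map (TProdProj Hc (μ * ν) (μ, ν) h) LinearMap.id
            (TensorProduct.map (gammaInv Mc Nc.N g (μ * ν)) LinearMap.id t)
          = TensorProduct.map (TensorProduct.map (g μ) LinearMap.id) LinearMap.id
              (TensorProduct.map (Mc.ρ μ ν) LinearMap.id t) := by
        intro h t
        induction t using TensorProduct.induction_on with
        | zero => simp only [map_zero]
        | tmul m0 h1 =>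
          simp only [TensorProduct.map_tmul, LinearMap.id_apply]
          rfl
        | add t1 t2 h1 h2 => simp only [map_add, h1, h2]
      have hco := LinearMap.congr_fun (Mc.coassoc μ ν β) m
      simp only [LinearMap.coe_comp, Function.comp_apply, LinearEquiv.coe_coe,
        LinearMap.id_apply] at hco
      have hco2 : TensorProduct.map (Mc.ρ μ ν) LinearMap.id (Mc.ρ (μ * ν) β m)
          = (TensorProduct.assoc k (Mc.M μ) (Hc.H ν) (Hc.H β)).symm
              (TensorProduct.map LinearMap.id (Hc.Δ ν β).toLinearMap
                (Mc.ρ μ (ν * β) (famCast (k := k) (mul_assoc μ ν β) m))) := by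
        rw [← hco]
        simp only [LinearEquiv.symm_apply_apply]
      have subclaim : ∀ (n0 : Mc.M μ) (u : Hc.H (μ⁻¹ * (μ * ν)) ⊗[k] Hc.H β),
          TensorProduct.map (TensorProduct.map LinearMap.id (famCast (k := k) s))
              LinearMap.id
            ((TensorProduct.assoc k (Nc.N μ) (Hc.H (μ⁻¹ * (μ * ν))) (Hc.H β)).symm
              ((g μ n0) ⊗ₜ[k] u))
          = TensorProduct.map (TensorProduct.map (g μ) LinearMap.id) LinearMap.id
              ((TensorProduct.assoc k (Mc.M μ) (Hc.H ν) (Hc.H β)).symm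
                (n0 ⊗ₜ[k] (TensorProduct.map (famCast (k := k) s) LinearMap.id u))) := by
        intro n0 u
        induction u using TensorProduct.induction_on with
        | zero => simp only [TensorProduct.tmul_zero, map_zero]
        | tmul h1 h2 =>
          simp only [TensorProduct.assoc_symm_tmul, TensorProduct.map_tmul,
            LinearMap.id_apply]
        | add u1 u2 h1 h2 =>
          simp only [TensorProduct.tmul_add, map_add, h1, h2]
      have claim : ∀ z : Mc.M μ ⊗[k] Hc.H (ν * β),
          TensorProduct.map (TensorProduct.map LinearMap.id (famCast (k := k) s))
              LinearMap.id
            (tensorCoact Hc (N := Nc.N) μ (ν * β) (μ * ν) β pf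
              (TensorProduct.map (g μ) LinearMap.id z))
          = TensorProduct.map (TensorProduct.map (g μ) LinearMap.id) LinearMap.id
              ((TensorProduct.assoc k (Mc.M μ) (Hc.H ν) (Hc.H β)).symm
                (TensorProduct.map LinearMap.id (Hc.Δ ν β).toLinearMap z)) := by
        intro z
        induction z using TensorProduct.induction_on with
        | zero => simp only [map_zero]
        | tmul m0 t =>
          have e : ν * β = (μ⁻¹ * (μ * ν)) * β := by rw [s]
          have h' : (μ⁻¹ * (μ * ν)) * β = ν * β := by rw [s]
          have hdc : Hc.Δ ν β t
              = TensorProduct.map (famCast (k := k) s) LinearMap.id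
                  (Hc.Δ (μ⁻¹ * (μ * ν)) β (famCast (k := k) e t)) := by
            have := Delta_cast (Hc := Hc) β s h' (famCast (k := k) e t)
            simp only [famCast_famCast, famCast_self_eq, LinearMap.id_apply] at this
            exact this
          simp only [tensorCoact, LinearMap.coe_comp, Function.comp_apply,
            TensorProduct.map_tmul, LinearEquiv.coe_coe, LinearMap.id_apply,
            AlgHom.toLinearMap_apply]
          rw [hdc]
          exact subclaim m0 _
        | add z1 z2 h1 h2 => simp only [map_add, h1, h2]
      show TensorProduct.map (TensorProduct.map LinearMap.id (famCast (k := k) s))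
            LinearMap.id
          (tensorCoact Hc (N := Nc.N) μ (ν * β) (μ * ν) β pf
            (TensorProduct.map (g μ) LinearMap.id
              (Mc.ρ μ (ν * β) (famCast (k := k) (mul_assoc μ ν β) m))))
        = TensorProduct.map (TProdProj Hc (μ * ν) (μ, ν) rfl) LinearMap.id
            (TensorProduct.map (gammaInv Mc Nc.N g (μ * ν)) LinearMap.id
              (Mc.ρ (μ * ν) β m))
      rw [hR2 rfl (Mc.ρ (μ * ν) β m), hco2]
      exact claim _
  · -- γ' ∘ γ = id
    intro f _hf hcol
    funext α
    refine LinearMap.ext fun m => funext fun q => ?_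
    obtain ⟨⟨μ, ν⟩, hq⟩ := q
    subst hq
    have s : μ⁻¹ * μ = 1 := inv_mul_cancel μ
    have pf : μ * (1 * ν) = μ * ν := by rw [one_mul]
    have key := congr_fun (LinearMap.congr_fun (hcol μ ν) m)
      ⟨(μ, 1), mul_one μ⟩
    have hL : ∀ (x : Nc.N μ ⊗[k] Hc.H (1 * ν)),
        TensorProduct.map ((TensorProduct.rid k (Nc.N μ)).toLinearMap ∘ₗ
            TensorProduct.map LinearMap.id Hc.ε.toLinearMap) LinearMap.id
          (TensorProduct.map (TensorProduct.map LinearMap.id (famCast (k := k) s))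
              LinearMap.id
            (tensorCoact Hc (N := Nc.N) μ (1 * ν) μ ν pf x))
        = TensorProduct.map LinearMap.id (famCast (k := k) (one_mul ν)) x := by
      intro x
      induction x using TensorProduct.induction_on with
      | zero => simp only [map_zero]
      | tmul n t =>
        have e : 1 * ν = (μ⁻¹ * μ) * ν := by rw [s]
        have h' : (μ⁻¹ * μ) * ν = 1 * ν := by rw [s]
        have hcnt := LinearMap.congr_fun (Hc.counit_left ν)
          (famCast (k := k) h' (famCast (k := k) e t))
        simp only [LinearMap.coe_comp, Function.comp_apply, LinearEquiv.coe_coe,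
          AlgHom.toLinearMap_apply] at hcnt
        rw [Delta_cast (Hc := Hc) ν s h'] at hcnt
        simp only [famCast_famCast] at hcnt
        have subclaim3 : ∀ (n0 : Nc.N μ) (w : Hc.H (μ⁻¹ * μ) ⊗[k] Hc.H ν),
            TensorProduct.map ((TensorProduct.rid k (Nc.N μ)).toLinearMap ∘ₗ
                TensorProduct.map LinearMap.id Hc.ε.toLinearMap) LinearMap.id
              (TensorProduct.map (TensorProduct.map LinearMap.id (famCast (k := k) s))
                  LinearMap.id
                ((TensorProduct.assoc k (Nc.N μ) (Hc.H (μ⁻¹ * μ)) (Hc.H ν)).symm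
                  (n0 ⊗ₜ[k] w)))
            = n0 ⊗ₜ[k] (TensorProduct.lid k (Hc.H ν))
                (TensorProduct.map Hc.ε.toLinearMap LinearMap.id
                  (TensorProduct.map (famCast (k := k) s) LinearMap.id w)) := by
          intro n0 w
          induction w using TensorProduct.induction_on with
          | zero => simp only [TensorProduct.tmul_zero, map_zero]
          | tmul h1 h2 =>
            simp only [TensorProduct.assoc_symm_tmul, TensorProduct.map_tmul,
              LinearMap.id_apply, LinearMap.coe_comp, Function.comp_apply,
              LinearEquiv.coe_coe, TensorProduct.rid_tmul, TensorProduct.lid_tmul,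
              AlgHom.toLinearMap_apply, TensorProduct.tmul_smul,
              TensorProduct.smul_tmul']
          | add w1 w2 hw1 hw2 =>
            simp only [TensorProduct.tmul_add, map_add, hw1, hw2]
        simp only [tensorCoact, LinearMap.coe_comp, Function.comp_apply,
          TensorProduct.map_tmul, LinearEquiv.coe_coe, LinearMap.id_apply,
          AlgHom.toLinearMap_apply]
        calc TensorProduct.map ((TensorProduct.rid k (Nc.N μ)).toLinearMap ∘ₗ
                TensorProduct.map LinearMap.id Hc.ε.toLinearMap) LinearMap.id
              (TensorProduct.map (TensorProduct.map LinearMap.id (famCast (k := k) s))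
                  LinearMap.id
                ((TensorProduct.assoc k (Nc.N μ) (Hc.H (μ⁻¹ * μ)) (Hc.H ν)).symm
                  (n ⊗ₜ[k] (Hc.Δ (μ⁻¹ * μ) ν (famCast (k := k) e t)))))
            = n ⊗ₜ[k] (TensorProduct.lid k (Hc.H ν))
                (TensorProduct.map Hc.ε.toLinearMap LinearMap.id
                  (TensorProduct.map (famCast (k := k) s) LinearMap.id
                    (Hc.Δ (μ⁻¹ * μ) ν (famCast (k := k) e t)))) := subclaim3 n _
          _ = n ⊗ₜ[k] famCast (k := k) ((e.trans h').trans (one_mul ν)) t := by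
              rw [hcnt]
          _ = TensorProduct.map LinearMap.id (famCast (k := k) (one_mul ν))
                (n ⊗ₜ[k] t) := by
              simp only [TensorProduct.map_tmul, LinearMap.id_apply]
      | add x1 x2 hx1 hx2 => simp only [map_add, hx1, hx2]
    have hR : ∀ (t : Mc.M μ ⊗[k] Hc.H ν),
        TensorProduct.map ((TensorProduct.rid k (Nc.N μ)).toLinearMap ∘ₗ
            TensorProduct.map LinearMap.id Hc.ε.toLinearMap) LinearMap.id
          (TensorProduct.map (TProdProj Hc μ (μ, 1) (mul_one μ)) LinearMap.id
            (TensorProduct.map (f μ) LinearMap.id t))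
        = TensorProduct.map (gammaMap Mc Nc.N f μ) LinearMap.id t := by
      intro t
      induction t using TensorProduct.induction_on with
      | zero => simp only [map_zero]
      | tmul m0 h1 =>
        simp only [TensorProduct.map_tmul, LinearMap.id_apply]
        rfl
      | add t1 t2 h1 h2 => simp only [map_add, h1, h2]
    show TensorProduct.map (gammaMap Mc Nc.N f μ) LinearMap.id (Mc.ρ μ ν m)
      = f (μ * ν) m ⟨(μ, ν), rfl⟩
    rw [TProd_congr_right (f (μ * ν) m) (one_mul ν) pf rfl]
    rw [← hL (f (μ * ν) m ⟨(μ, 1 * ν), pf⟩)]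
    rw [← hR (Mc.ρ μ ν m)]
    exact congrArg (fun z => TensorProduct.map
      ((TensorProduct.rid k (Nc.N μ)).toLinearMap ∘ₗ
        TensorProduct.map LinearMap.id Hc.ε.toLinearMap) LinearMap.id z) key.symm
  · -- γ ∘ γ' = id
    intro g hg
    funext α
    ext m
    have key := LinearMap.congr_fun (Mc.counit α) (famCast (k := k) (mul_one α).symm m)
    simp only [LinearMap.coe_comp, Function.comp_apply, LinearEquiv.coe_coe,
      famCast_famCast, famCast_self_eq, LinearMap.id_apply] at key
    have comm : ∀ t : Mc.M α ⊗[k] Hc.H 1,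
        (TensorProduct.rid k (Nc.N α)) (TensorProduct.map LinearMap.id Hc.ε.toLinearMap
          (TensorProduct.map (g α) LinearMap.id t))
        = g α ((TensorProduct.rid k (Mc.M α)) (TensorProduct.map LinearMap.id
            Hc.ε.toLinearMap t)) := by
      intro t
      induction t using TensorProduct.induction_on with
      | zero => simp
      | tmul x y => simp
      | add x y hx hy => simp [hx, hy]
    show (TensorProduct.rid k (Nc.N α)) (TensorProduct.map LinearMap.id Hc.ε.toLinearMap
      (TensorProduct.map (g α) LinearMap.id
        (Mc.ρ α 1 (famCast (k := k) (mul_one α).symm m)))) = g α m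
    rw [comm, key]
  · -- additivity
    intro f f'
    funext α
    ext m
    simp [gammaMap]
  · -- scalar
    intro c f
    funext α
    ext m
    simp [gammaMap]
end
end

section
/- Let H be a Hopf G-coalgebra, A an H-comodule Poisson algebra, B = A^{AcoH}, M a Poisson (A,H)-Hopf module, and N a B-module that is a trivial right H-comodule. Then there is a functorial k-linear isomorphism ψ : Hom^H_{PA}(A ⊗_B N, M) → Hom^{H₀}_B(N, M^{AcoH}) given by ψ(f)_α(n) = f_α(1_{A_α} ⊗ n), with inverse ψ'(g)_α(a ⊗ n) = a · g_α(n). Consequently the functors N ↦ A ⊗_B N and M ↦ M^{AcoH} form an adjoint pair. -/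
/-!
Since `1 ∈ A_γ` is coinvariant and Poisson-central (`ρ(1) = 1 ⊗ 1`, `{a, 1} = 0`), colinearity and
Lie linearity of `f` put `(f_γ (1 ⊗ n))_γ` in `M^{AcoH}`. Conversely, for a coinvariant family `m`
the coaction on `a · m` only sees the coaction on `a`, which makes `a ⊗ n ↦ a · g(n)` colinear; its
Lie linearity is the Poisson identity `a' ⋄ (a · m) = {a', a} · m + a · (a' ⋄ m)` with `a' ⋄ m = 0`.
The two constructions are inverse because an `A`-linear `f` is determined by the values `f(1 ⊗ n)`.
-/

open TensorProduct

noncomputable section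

set_option synthInstance.maxHeartbeats 1000000
set_option maxHeartbeats 2000000

variable {k G : Type*} [Field k] [CommGroup G]

variable {Hc : HopfGCoalgebra k G} {Ac : GComodulePoissonAlgebra Hc}

section BX

lemma pb_one_right (Ac : GComodulePoissonAlgebra Hc) (α : G) (a : Ac.A α) :
    Ac.pb α a 1 = 0 := by
  have h := Ac.pb_leibniz α a 1 1
  simp only [mul_one, one_mul] at h
  exact right_eq_add.mp h

lemma pb_one_left (Ac : GComodulePoissonAlgebra Hc) (α : G) (b : Ac.A α) :
    Ac.pb α 1 b = 0 := by
  rw [Ac.pb_skew, pb_one_right, neg_zero]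

variable (Ac) in
/-- `B = A^{AcoH}`: the coinvariant families with values in the Poisson center,
as a subalgebra of `∏_γ A_γ`. -/
def Bfam : Subalgebra k (∀ γ : G, Ac.A γ) where
  carrier := {a | Ac.IsCoinv a ∧ ∀ (γ : G) (b : Ac.A γ), Ac.pb γ (a γ) b = 0}
  mul_mem' := by
    rintro x y ⟨hx, hx'⟩ ⟨hy, hy'⟩
    refine ⟨fun γ β => ?_, fun γ b => ?_⟩
    · rw [Pi.mul_apply, map_mul, hx γ β, hy γ β, Pi.mul_apply,
        Algebra.TensorProduct.tmul_mul_tmul, mul_one]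
    · rw [Pi.mul_apply, Ac.pb_skew, Ac.pb_leibniz]
      have h1 : Ac.pb γ b (x γ) = 0 := by rw [Ac.pb_skew, hx' γ b, neg_zero]
      have h2 : Ac.pb γ b (y γ) = 0 := by rw [Ac.pb_skew, hy' γ b, neg_zero]
      rw [h1, h2, zero_mul, mul_zero, add_zero, neg_zero]
  one_mem' := by
    refine ⟨fun γ β => ?_, fun γ b => ?_⟩
    · rw [Pi.one_apply, map_one, Pi.one_apply, Algebra.TensorProduct.one_def]
    · rw [Pi.one_apply]; exact pb_one_left Ac γ b
  add_mem' := by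
    rintro x y ⟨hx, hx'⟩ ⟨hy, hy'⟩
    refine ⟨fun γ β => ?_, fun γ b => ?_⟩
    · rw [Pi.add_apply, map_add, hx γ β, hy γ β, Pi.add_apply,
        TensorProduct.add_tmul]
    · rw [Pi.add_apply, map_add, LinearMap.add_apply, hx' γ b, hy' γ b, add_zero]
  algebraMap_mem' := by
    intro r
    refine ⟨fun γ β => ?_, fun γ b => ?_⟩
    · show (Ac.ρ γ β) (algebraMap k (Ac.A (γ * β)) r) = _
      rw [AlgHom.commutes, Algebra.TensorProduct.algebraMap_apply]
      simp [Pi.algebraMap_apply]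
    · show Ac.pb γ (algebraMap k (Ac.A γ) r) b = 0
      rw [Algebra.algebraMap_eq_smul_one, map_smul, LinearMap.smul_apply,
        pb_one_left, smul_zero]

variable (Ac) in
/-- `M^{AcoH}`: the coinvariant families killed by the Lie action, as a
`k`-submodule of `∏_γ M_γ`. -/
def Xfam (Mc : PoissonHopfModule Ac) : Submodule k (∀ γ : G, Mc.M γ) where
  carrier := {m | Mc.IsCoinv m ∧ ∀ (γ : G) (a : Ac.A γ), Mc.dia γ a (m γ) = 0}
  zero_mem' := by
    refine ⟨fun γ β => ?_, fun γ a => ?_⟩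
    · show Mc.ρ γ β 0 = (0 : Mc.M γ) ⊗ₜ[k] (1 : Hc.H β)
      rw [map_zero, TensorProduct.zero_tmul]
    · show Mc.dia γ a 0 = 0
      rw [map_zero]
  add_mem' := by
    rintro x y ⟨hx, hx'⟩ ⟨hy, hy'⟩
    refine ⟨fun γ β => ?_, fun γ a => ?_⟩
    · rw [Pi.add_apply, map_add, hx γ β, hy γ β, Pi.add_apply,
        TensorProduct.add_tmul]
    · rw [Pi.add_apply, map_add, hx' γ a, hy' γ a, add_zero]
  smul_mem' := by
    rintro c x ⟨hx, hx'⟩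
    refine ⟨fun γ β => ?_, fun γ a => ?_⟩
    · rw [Pi.smul_apply, map_smul, hx γ β, Pi.smul_apply, TensorProduct.smul_tmul']
    · rw [Pi.smul_apply, map_smul, hx' γ a, smul_zero]

variable (Ac) {Mc : PoissonHopfModule Ac}

instance instAlgebraBfam (α : G) : Algebra ↥(Bfam Ac) (Ac.A α) :=
  (((Pi.evalAlgHom k (fun γ => Ac.A γ) α).comp (Bfam Ac).val) :
    ↥(Bfam Ac) →+* Ac.A α).toAlgebra

lemma algebraMap_Bfam_apply (α : G) (b : ↥(Bfam Ac)) :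
    algebraMap ↥(Bfam Ac) (Ac.A α) b = (b : ∀ γ : G, Ac.A γ) α := rfl

instance (α : G) : IsScalarTower k ↥(Bfam Ac) (Ac.A α) :=
  ⟨fun c b a => by
    have hcb : ((c • b : ↥(Bfam Ac)) : ∀ γ : G, Ac.A γ) α
        = c • ((b : ∀ γ : G, Ac.A γ) α) := rfl
    calc (c • b) • a = algebraMap ↥(Bfam Ac) (Ac.A α) (c • b) * a :=
          Algebra.smul_def _ _
      _ = (c • ((b : ∀ γ : G, Ac.A γ) α)) * a := by
          rw [algebraMap_Bfam_apply, hcb]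
      _ = c • (((b : ∀ γ : G, Ac.A γ) α) * a) := smul_mul_assoc c _ a
      _ = c • (b • a) := by rw [Algebra.smul_def b a, algebraMap_Bfam_apply]⟩

instance (α : G) : SMulCommClass ↥(Bfam Ac) k (Ac.A α) :=
  ⟨fun b c a => by
    calc b • (c • a) = (b : ∀ γ : G, Ac.A γ) α * (c • a) := by
          rw [Algebra.smul_def b (c • a), algebraMap_Bfam_apply]
      _ = c • ((b : ∀ γ : G, Ac.A γ) α * a) := mul_smul_comm c _ a
      _ = c • (b • a) := by rw [Algebra.smul_def b a, algebraMap_Bfam_apply]⟩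

instance instSMulBfamXfam : SMul ↥(Bfam Ac) ↥(Xfam Ac Mc) where
  smul b m := ⟨fun γ => Mc.smul γ ((b : ∀ γ : G, Ac.A γ) γ) ((m : ∀ γ : G, Mc.M γ) γ), by
    obtain ⟨hb, hb'⟩ := b.2
    obtain ⟨hm, hm'⟩ := m.2
    refine ⟨fun γ β => ?_, fun γ a => ?_⟩
    · have h := congrArg (fun F => F ((b : ∀ γ : G, Ac.A γ) (γ * β) ⊗ₜ[k]
        (m : ∀ γ : G, Mc.M γ) (γ * β))) (Mc.smul_comp γ β)
      simp only [LinearMap.comp_apply, TensorProduct.lift.tmul,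
        TensorProduct.map_tmul, LinearEquiv.coe_toLinearMap] at h
      rw [h]
      simp only [AlgHom.toLinearMap_apply, hb γ β, hm γ β,
        TensorProduct.tensorTensorTensorComm_tmul, TensorProduct.map_tmul,
        TensorProduct.lift.tmul, LinearMap.mul'_apply, mul_one]
    · have h1 : Ac.pb γ a ((b : ∀ γ : G, Ac.A γ) γ) = 0 := by
        rw [Ac.pb_skew, hb' γ a, neg_zero]
      rw [Mc.poisson1, h1, map_zero, LinearMap.zero_apply, zero_add,
        hm' γ a, map_zero]⟩

instance instModuleBfamXfam : Module ↥(Bfam Ac) ↥(Xfam Ac Mc) where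
  one_smul m := Subtype.ext (funext fun γ => Mc.one_smul γ _)
  mul_smul b b' m := Subtype.ext (funext fun γ => Mc.mul_smul γ _ _ _)
  smul_zero b := Subtype.ext (funext fun γ => map_zero _)
  smul_add b m m' := Subtype.ext (funext fun γ => map_add _ _ _)
  add_smul b b' m := Subtype.ext (funext fun γ => by
    have h : ((b + b' : ↥(Bfam Ac)) : ∀ γ : G, Ac.A γ) γ
        = (b : ∀ γ : G, Ac.A γ) γ + (b' : ∀ γ : G, Ac.A γ) γ := rfl
    change Mc.smul γ (((b + b' : ↥(Bfam Ac)) : ∀ γ : G, Ac.A γ) γ) _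
      = Mc.smul γ _ _ + Mc.smul γ _ _
    rw [h, map_add, LinearMap.add_apply])
  zero_smul m := Subtype.ext (funext fun γ => by
    have h : ((0 : ↥(Bfam Ac)) : ∀ γ : G, Ac.A γ) γ = 0 := rfl
    change Mc.smul γ (((0 : ↥(Bfam Ac)) : ∀ γ : G, Ac.A γ) γ) _ = 0
    rw [h, map_zero, LinearMap.zero_apply])

end BX

instance : IsScalarTower k ↥(Bfam Ac) ↥(Xfam Ac Mc) :=
  ⟨fun c b m => Subtype.ext (funext fun γ => by
    have h : ((c • b : ↥(Bfam Ac)) : ∀ γ : G, Ac.A γ) γ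
        = c • ((b : ∀ γ : G, Ac.A γ) γ) := rfl
    change Mc.smul γ (((c • b : ↥(Bfam Ac)) : ∀ γ : G, Ac.A γ) γ) _ = _
    rw [h, map_smul, LinearMap.smul_apply]
    rfl)⟩

/-- The component `A_α ⊗_B M^{AcoH}` of `A ⊗_B M^{AcoH}`. -/
abbrev TB (Mc : PoissonHopfModule Ac) (α : G) : Type _ :=
  Ac.A α ⊗[↥(Bfam Ac)] ↥(Xfam Ac Mc)

variable {Mc : PoissonHopfModule Ac}

/-- The `k`-linear map `x ↦ x ⊗_B m`. -/
def mkTB (m : ↥(Xfam Ac Mc)) (μ : G) : Ac.A μ →ₗ[k] TB Mc μ where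
  toFun x := x ⊗ₜ[↥(Bfam Ac)] m
  map_add' x y := TensorProduct.add_tmul x y m
  map_smul' c x := (TensorProduct.smul_tmul' c x m).symm

section Adjunction

variable (Mc : PoissonHopfModule Ac) (N₀ : Type*) [AddCommGroup N₀] [Module k N₀]
  [Module ↥(Bfam Ac) N₀] [IsScalarTower k ↥(Bfam Ac) N₀]

/-- The `k`-linear map `x ↦ x ⊗_B n` into `A_μ ⊗_B N`. -/
def mkTN (n : N₀) (μ : G) : Ac.A μ →ₗ[k] (Ac.A μ ⊗[↥(Bfam Ac)] N₀) where
  toFun x := x ⊗ₜ[↥(Bfam Ac)] n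
  map_add' x y := TensorProduct.add_tmul x y n
  map_smul' c x := (TensorProduct.smul_tmul' c x n).symm

/-- Morphisms of Poisson `(A,H)`-Hopf modules `A ⊗_B N → M`, for a trivial
`H`-comodule  `B`-module `N`. -/
def IsPAHomTN (f : ∀ α : G, (Ac.A α ⊗[↥(Bfam Ac)] N₀) →ₗ[k] Mc.M α) : Prop :=
  (∀ (α : G) (a' a : Ac.A α) (n : N₀),
    f α ((a' * a) ⊗ₜ[↥(Bfam Ac)] n) = Mc.smul α a' (f α (a ⊗ₜ[↥(Bfam Ac)] n))) ∧
  (∀ (α : G) (a' a : Ac.A α) (n : N₀),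
    f α (Ac.pb α a' a ⊗ₜ[↥(Bfam Ac)] n) = Mc.dia α a' (f α (a ⊗ₜ[↥(Bfam Ac)] n))) ∧
  (∀ (μ ν : G) (a : Ac.A (μ * ν)) (n : N₀),
    Mc.ρ μ ν (f (μ * ν) (a ⊗ₜ[↥(Bfam Ac)] n))
      = TensorProduct.map (f μ) LinearMap.id
          (TensorProduct.map (mkTN (Ac := Ac) N₀ n μ)
            (LinearMap.id : Hc.H ν →ₗ[k] Hc.H ν) (Ac.ρ μ ν a)))

variable {Mc N₀}

instance instModuleBfamM (α : G) : Module ↥(Bfam Ac) (Mc.M α) where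
  smul b m := Mc.smul α ((b : ∀ γ : G, Ac.A γ) α) m
  one_smul m := Mc.one_smul α m
  mul_smul _ _ m := Mc.mul_smul α _ _ m
  smul_zero _ := map_zero _
  smul_add _ m m' := map_add _ m m'
  add_smul _ _ m := LinearMap.congr_fun (map_add (Mc.smul α) _ _) m
  zero_smul m := LinearMap.congr_fun (map_zero (Mc.smul α)) m

instance (α : G) : IsScalarTower k ↥(Bfam Ac) (Mc.M α) :=
  ⟨fun c _ m => LinearMap.congr_fun (map_smul (Mc.smul α) c _) m⟩

section

omit [Module k N₀] [IsScalarTower k ↥(Bfam Ac) N₀]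

lemma PoissonHopfModule.ρ_smul_of_isCoinv {m : ∀ γ : G, Mc.M γ} (hm : Mc.IsCoinv m)
    (μ ν : G) (a : Ac.A (μ * ν)) :
    Mc.ρ μ ν (Mc.smul (μ * ν) a (m (μ * ν)))
      = TensorProduct.map ((Mc.smul μ).flip (m μ)) LinearMap.id (Ac.ρ μ ν a) := by
  have h := LinearMap.congr_fun (Mc.smul_comp μ ν) (a ⊗ₜ[k] m (μ * ν))
  simp only [LinearMap.comp_apply, TensorProduct.lift.tmul, TensorProduct.map_tmul,
    LinearEquiv.coe_toLinearMap, AlgHom.toLinearMap_apply, hm μ ν] at h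
  rw [h]
  clear h
  induction Ac.ρ μ ν a using TensorProduct.induction_on with
  | zero => simp only [TensorProduct.zero_tmul, map_zero]
  | tmul x y => simp [TensorProduct.tensorTensorTensorComm_tmul]
  | add s t hs ht => simp only [TensorProduct.add_tmul, map_add, hs, ht]

namespace IsPAHomTN

variable {f : ∀ α : G, (Ac.A α ⊗[↥(Bfam Ac)] N₀) →ₗ[k] Mc.M α} (hf : IsPAHomTN Mc N₀ f)
include hf

lemma apply_tmul (α : G) (a : Ac.A α) (n : N₀) :
    f α (a ⊗ₜ[↥(Bfam Ac)] n) = Mc.smul α a (f α ((1 : Ac.A α) ⊗ₜ[↥(Bfam Ac)] n)) := by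
  rw [← hf.1 α a 1 n, mul_one]

lemma one_tmul_mem_Xfam (n : N₀) :
    (fun γ => f γ ((1 : Ac.A γ) ⊗ₜ[↥(Bfam Ac)] n)) ∈ Xfam Ac Mc := by
  refine ⟨fun γ β => ?_, fun γ a => ?_⟩
  · rw [hf.2.2 γ β 1 n, map_one, Algebra.TensorProduct.one_def]
    rfl
  · rw [← hf.2.1 γ a 1 n, pb_one_right, TensorProduct.zero_tmul, map_zero]

end IsPAHomTN

def homToInvariants (f : {f : ∀ α : G, (Ac.A α ⊗[↥(Bfam Ac)] N₀) →ₗ[k] Mc.M α //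
    IsPAHomTN Mc N₀ f}) : N₀ →ₗ[↥(Bfam Ac)] ↥(Xfam Ac Mc) where
  toFun n := ⟨_, f.2.one_tmul_mem_Xfam n⟩
  map_add' n n' := Subtype.ext (funext fun γ => by
    simp only [TensorProduct.tmul_add, map_add, Submodule.coe_add, Pi.add_apply])
  map_smul' b n := Subtype.ext (funext fun γ => by
    have h : (1 : Ac.A γ) ⊗ₜ[↥(Bfam Ac)] (b • n)
        = (b : ∀ γ : G, Ac.A γ) γ ⊗ₜ[↥(Bfam Ac)] n := by
      rw [TensorProduct.tmul_smul, TensorProduct.smul_tmul', Algebra.smul_def,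
        algebraMap_Bfam_apply, mul_one]
    change f.1 γ _ = Mc.smul γ ((b : ∀ γ : G, Ac.A γ) γ) (f.1 γ _)
    rw [h, f.2.apply_tmul γ])

def homOfInvariants (g : N₀ →ₗ[↥(Bfam Ac)] ↥(Xfam Ac Mc)) (α : G) :
    (Ac.A α ⊗[↥(Bfam Ac)] N₀) →ₗ[k] Mc.M α :=
  (TensorProduct.lift (LinearMap.mk₂ ↥(Bfam Ac)
    (fun a n => Mc.smul α a (((g n : ↥(Xfam Ac Mc)) : ∀ δ : G, Mc.M δ) α))
    (fun a a' n => by simp only [map_add, LinearMap.add_apply])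
    (fun b a n => Mc.mul_smul α _ a _)
    (fun a n n' => by simp only [map_add, Submodule.coe_add, Pi.add_apply])
    (fun b a n => by
      rw [map_smul]
      change Mc.smul α a (Mc.smul α ((b : ∀ γ : G, Ac.A γ) α) _)
        = Mc.smul α ((b : ∀ γ : G, Ac.A γ) α) (Mc.smul α a _)
      rw [← Mc.mul_smul, ← Mc.mul_smul, mul_comm]))).restrictScalars k

@[simp] lemma homOfInvariants_tmul (g : N₀ →ₗ[↥(Bfam Ac)] ↥(Xfam Ac Mc)) (α : G)
    (a : Ac.A α) (n : N₀) :
    homOfInvariants g α (a ⊗ₜ[↥(Bfam Ac)] n)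
      = Mc.smul α a (((g n : ↥(Xfam Ac Mc)) : ∀ δ : G, Mc.M δ) α) := rfl

lemma isPAHomTN_homOfInvariants (g : N₀ →ₗ[↥(Bfam Ac)] ↥(Xfam Ac Mc)) :
    IsPAHomTN Mc N₀ (homOfInvariants g) := by
  refine ⟨fun α a' a n => Mc.mul_smul α a' a _, fun α a' a n => ?_, fun μ ν a n => ?_⟩
  · rw [homOfInvariants_tmul, homOfInvariants_tmul, Mc.poisson1, (g n).2.2 α a', map_zero,
      add_zero]
  · rw [homOfInvariants_tmul, Mc.ρ_smul_of_isCoinv (g n).2.1, TensorProduct.map_map]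
    rfl

lemma homOfInvariants_homToInvariants
    (f : {f : ∀ α : G, (Ac.A α ⊗[↥(Bfam Ac)] N₀) →ₗ[k] Mc.M α // IsPAHomTN Mc N₀ f}) :
    homOfInvariants (homToInvariants f) = f.1 := by
  funext α
  ext x
  induction x using TensorProduct.induction_on with
  | zero => simp only [map_zero]
  | tmul a n => exact (f.2.apply_tmul α a n).symm
  | add x y hx hy => simp only [map_add, hx, hy]

variable (Mc N₀) in
def adjunctionEquiv :
    {f : ∀ α : G, (Ac.A α ⊗[↥(Bfam Ac)] N₀) →ₗ[k] Mc.M α // IsPAHomTN Mc N₀ f}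
      ≃ (N₀ →ₗ[↥(Bfam Ac)] ↥(Xfam Ac Mc)) where
  toFun := homToInvariants
  invFun g := ⟨homOfInvariants g, isPAHomTN_homOfInvariants g⟩
  left_inv f := Subtype.ext (homOfInvariants_homToInvariants f)
  right_inv _ := LinearMap.ext fun _ => Subtype.ext (funext fun γ => Mc.one_smul γ _)

end

variable (Mc N₀)

/-- The adjunction isomorphism
`ψ : Hom^H_{PA}(A ⊗_B N, M) ≅ Hom^{H₀}_B(N, M^{AcoH})`, `ψ(f)(n)_α = f_α(1 ⊗ n)`,
with inverse `ψ'(g)_α(a ⊗ n) = a · g(n)_α`; hence the functors `N ↦ A ⊗_B N` and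
`M ↦ M^{AcoH}` are adjoint. -/
theorem adjunction_iso :
    ∃ e : {f : ∀ α : G, (Ac.A α ⊗[↥(Bfam Ac)] N₀) →ₗ[k] Mc.M α //
            IsPAHomTN Mc N₀ f} ≃ (N₀ →ₗ[↥(Bfam Ac)] ↥(Xfam Ac Mc)),
      (∀ (f : {f : ∀ α : G, (Ac.A α ⊗[↥(Bfam Ac)] N₀) →ₗ[k] Mc.M α //
          IsPAHomTN Mc N₀ f}) (n : N₀) (γ : G),
        ((e f n : ↥(Xfam Ac Mc)) : ∀ δ : G, Mc.M δ) γ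
          = f.1 γ ((1 : Ac.A γ) ⊗ₜ[↥(Bfam Ac)] n)) ∧
      (∀ (g : N₀ →ₗ[↥(Bfam Ac)] ↥(Xfam Ac Mc)) (α : G) (a : Ac.A α) (n : N₀),
        (e.symm g).1 α (a ⊗ₜ[↥(Bfam Ac)] n)
          = Mc.smul α a (((g n : ↥(Xfam Ac Mc)) : ∀ δ : G, Mc.M δ) α)) :=
  ⟨adjunctionEquiv Mc N₀, fun _ _ _ => rfl, fun _ _ _ _ => rfl⟩

end Adjunction
end
end
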